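/- Let ⟪−,−⟫ be a B-linear double bracket on A admitting a moment map μ, and set {a,b} := m(⟪a,b⟫). Then {a, μ_s} = 0 for all a ∈ A and all s ∈ I, hence {a, μ} = 0 for all a ∈ A. Consequently, for every λ = Σ_{s∈I} λ_s e_s ∈ B and every element x of the two-sided ideal (μ−λ) of A generated by μ−λ, one has {a, x} ∈ (μ−λ) for all a ∈ A; thus the induced bracket on H₀(A) = A/[A,A] descends to the quotient A/(μ−λ). -/

import Mathlib

open TensorProduct

noncomputable section

/-- The flip `u ⊗ v ↦ v ⊗ u` on `A ⊗[k] A`. -/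
def flipT (k A : Type*) [CommRing k] [Ring A] [Algebra k A] :
    A ⊗[k] A →ₗ[k] A ⊗[k] A :=
  (TensorProduct.comm k A A).toLinearMap

/-- Outer left multiplication `b · (u ⊗ v) = (b * u) ⊗ v` on `A ⊗[k] A`. -/
def outL (k : Type*) {A : Type*} [CommRing k] [Ring A] [Algebra k A] (b : A) :
    A ⊗[k] A →ₗ[k] A ⊗[k] A :=
  TensorProduct.map (LinearMap.mulLeft k b) LinearMap.id

/-- Outer right multiplication `(u ⊗ v) · c = u ⊗ (v * c)` on `A ⊗[k] A`. -/
def outR (k : Type*) {A : Type*} [CommRing k] [Ring A] [Algebra k A] (c : A) :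
    A ⊗[k] A →ₗ[k] A ⊗[k] A :=
  TensorProduct.map LinearMap.id (LinearMap.mulRight k c)

/-- The cyclic permutation `τ : a₁ ⊗ a₂ ⊗ a₃ ↦ a₃ ⊗ a₁ ⊗ a₂`. -/
def tau3 (k A : Type*) [CommRing k] [Ring A] [Algebra k A] :
    A ⊗[k] (A ⊗[k] A) →ₗ[k] A ⊗[k] (A ⊗[k] A) :=
  (TensorProduct.comm k (A ⊗[k] A) A).toLinearMap ∘ₗ
    (TensorProduct.assoc k A A A).symm.toLinearMap

/-- `D` is a double bracket on `A`: a bilinear map `A × A → A ⊗ A` satisfying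
cyclic antisymmetry and the (outer-bimodule) derivation rule in its second slot. -/
structure IsDoubleBracket {k A : Type*} [CommRing k] [Ring A] [Algebra k A]
    (D : A →ₗ[k] A →ₗ[k] A ⊗[k] A) : Prop where
  cyclic_antisymm : ∀ a b : A, D a b = - flipT k A (D b a)
  derivation : ∀ a b c : A, D a (b * c) = outR k c (D a b) + outL k b (D a c)

/-- The map `d ↦ ⟪a, d′⟫ ⊗ d″` on `A ⊗ A`, valued in `A ⊗ (A ⊗ A)`. -/
def dblExt {k A : Type*} [CommRing k] [Ring A] [Algebra k A]
    (D : A →ₗ[k] A →ₗ[k] A ⊗[k] A) (a : A) :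
    A ⊗[k] A →ₗ[k] A ⊗[k] (A ⊗[k] A) :=
  (TensorProduct.assoc k A A A).toLinearMap ∘ₗ TensorProduct.map (D a) LinearMap.id

/-- The triple bracket associated with a double bracket:
`⟪a,b,c⟫ = ⟪a,⟪b,c⟫′⟫ ⊗ ⟪b,c⟫″ + τ(⟪b,⟪c,a⟫′⟫ ⊗ ⟪c,a⟫″) + τ²(⟪c,⟪a,b⟫′⟫ ⊗ ⟪a,b⟫″)`. -/
def tripleBracket {k A : Type*} [CommRing k] [Ring A] [Algebra k A]
    (D : A →ₗ[k] A →ₗ[k] A ⊗[k] A) (a b c : A) :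
    A ⊗[k] (A ⊗[k] A) :=
  dblExt D a (D b c) + tau3 k A (dblExt D b (D c a))
    + tau3 k A (tau3 k A (dblExt D c (D a b)))

/-- `μ` is a moment map for the double bracket `D` relative to the orthogonal
idempotents `e`: writing `μ_s = e_s μ e_s`, the off-diagonal components of `μ`
vanish and each `μ_s` satisfies the additive property
`⟪μ_s, a⟫ = a e_s ⊗ e_s − e_s ⊗ e_s a`. -/
def IsMomentMap {k A : Type*} [CommRing k] [Ring A] [Algebra k A]
    {I : Type*} (e : I → A) (D : A →ₗ[k] A →ₗ[k] A ⊗[k] A) (μ : A) : Prop :=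
  (∀ s t : I, s ≠ t → e s * μ * e t = 0) ∧
  ∀ (s : I) (a : A),
    D (e s * μ * e s) a = (a * e s) ⊗ₜ[k] (e s) - (e s) ⊗ₜ[k] (e s * a)

/-- The multiplication map `A ⊗ A → A`, `u ⊗ v ↦ u v`. -/
def mulT2 (k A : Type*) [CommRing k] [Ring A] [Algebra k A] :
    A ⊗[k] A →ₗ[k] A :=
  LinearMap.mul' k A

/-- The multiplication map `A ⊗ A ⊗ A → A`, `u ⊗ v ⊗ w ↦ u v w`. -/
def mulT3 (k A : Type*) [CommRing k] [Ring A] [Algebra k A] :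
    A ⊗[k] (A ⊗[k] A) →ₗ[k] A :=
  LinearMap.mul' k A ∘ₗ TensorProduct.map LinearMap.id (LinearMap.mul' k A)

/-- `[A,A]`, the k-linear span of commutators in `A`. -/
def commutatorSpan (k A : Type*) [CommRing k] [Ring A] [Algebra k A] :
    Submodule k A :=
  Submodule.span k {x : A | ∃ a b : A, x = a * b - b * a}

/-- The two-sided ideal of `A` generated by `x` (as a k-submodule: the span of
all elements `p * x * q`). -/
def twoSidedSpan (k : Type*) {A : Type*} [CommRing k] [Ring A] [Algebra k A]
    (x : A) : Submodule k A :=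
  Submodule.span k {y : A | ∃ p q : A, y = p * x * q}

/-! Since `m ∘ flip = m`, cyclic antisymmetry and the moment map identity give
`{a, μ_s} = -m(a e_s ⊗ e_s - e_s ⊗ e_s a) = 0`, and `μ = Σ μ_s` gives `{a, μ} = 0`.
By B-linearity `{a, -}` also kills `μ - λ`; as `{a, -}` is a derivation of `A`, it then maps
the ideal `(μ - λ)` into itself. -/

section DoubleBracket

variable {k A : Type*} [CommRing k] [Ring A] [Algebra k A]

@[simp]
lemma mulT2_tmul (u v : A) : mulT2 k A (u ⊗ₜ[k] v) = u * v := rfl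

lemma mulT2_outR (c : A) (x : A ⊗[k] A) : mulT2 k A (outR k c x) = mulT2 k A x * c := by
  induction x using TensorProduct.induction_on with
  | zero => simp
  | tmul u v => simp [outR, mul_assoc]
  | add x y hx hy => simp only [map_add, hx, hy, add_mul]

lemma mulT2_outL (b : A) (x : A ⊗[k] A) : mulT2 k A (outL k b x) = b * mulT2 k A x := by
  induction x using TensorProduct.induction_on with
  | zero => simp
  | tmul u v => simp [outL, mul_assoc]
  | add x y hx hy => simp only [map_add, hx, hy, mul_add]

namespace IsDoubleBracket

variable {D : A →ₗ[k] A →ₗ[k] A ⊗[k] A}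

lemma mulT2_apply_mul (hD : IsDoubleBracket D) (a b c : A) :
    mulT2 k A (D a (b * c)) = mulT2 k A (D a b) * c + b * mulT2 k A (D a c) := by
  rw [hD.derivation, map_add, mulT2_outR, mulT2_outL]

lemma mulT2_apply_mem_twoSidedSpan (hD : IsDoubleBracket D) {a ν x : A}
    (hν : mulT2 k A (D a ν) = 0) (hx : x ∈ twoSidedSpan k ν) :
    mulT2 k A (D a x) ∈ twoSidedSpan k ν := by
  have mem : ∀ p q : A, p * ν * q ∈ twoSidedSpan k ν := fun p q =>
    Submodule.subset_span ⟨p, q, rfl⟩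
  induction hx using Submodule.span_induction with
  | mem y hy =>
    obtain ⟨p, q, rfl⟩ := hy
    rw [hD.mulT2_apply_mul, hD.mulT2_apply_mul, hν, mul_zero, add_zero]
    exact add_mem (mem _ q) (by simpa [mul_assoc] using mem p (mulT2 k A (D a q)))
  | zero => simp
  | add y z _ _ hy hz => rw [map_add, map_add]; exact add_mem hy hz
  | smul c y _ hy => rw [map_smul, map_smul]; exact Submodule.smul_mem _ c hy

end IsDoubleBracket

lemma eq_sum_mul_mul_self_of_offDiag_eq_zero {I : Type*} [Fintype I] {e : I → A}
    (he_sum : ∑ s, e s = 1) {x : A} (hoff : ∀ s t, s ≠ t → e s * x * e t = 0) :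
    x = ∑ s, e s * x * e s := by
  calc x = (∑ s, e s) * x * (∑ t, e t) := by rw [he_sum, one_mul, mul_one]
    _ = ∑ s, ∑ t, e s * x * e t := by
        simp only [Finset.sum_mul, Finset.mul_sum]; exact Finset.sum_comm
    _ = ∑ s, e s * x * e s := Finset.sum_congr rfl fun s _ =>
        Finset.sum_eq_single_of_mem s (Finset.mem_univ s) fun t _ hts => hoff s t hts.symm

namespace IsMomentMap

variable {I : Type*} {e : I → A} {D : A →ₗ[k] A →ₗ[k] A ⊗[k] A} {μ : A}

lemma mulT2_apply_corner (hμ : IsMomentMap e D μ) (hD : IsDoubleBracket D) (a : A) (s : I) :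
    mulT2 k A (D a (e s * μ * e s)) = 0 := by
  rw [hD.cyclic_antisymm, hμ.2]
  simp [flipT, mul_assoc]

lemma mulT2_apply_self [Fintype I] (hμ : IsMomentMap e D μ) (hD : IsDoubleBracket D)
    (he_sum : ∑ s, e s = 1) (a : A) : mulT2 k A (D a μ) = 0 := by
  rw [eq_sum_mul_mul_self_of_offDiag_eq_zero he_sum hμ.1, map_sum, map_sum]
  exact Finset.sum_eq_zero fun s _ => hμ.mulT2_apply_corner hD a s

end IsMomentMap

end DoubleBracket

theorem momentMap_bracket_descends_general
    {k : Type*} [Field k]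
    {A : Type*} [Ring A] [Algebra k A]
    {I : Type*} [Fintype I]
    (e : I → A)
    (he_sum : ∑ s, e s = 1)
    (D : A →ₗ[k] A →ₗ[k] A ⊗[k] A)
    (hD : IsDoubleBracket D)
    (hDB : ∀ (s : I) (a : A), D (e s) a = 0 ∧ D a (e s) = 0)
    (μ : A) (hμ : IsMomentMap e D μ) :
    (∀ (a : A) (s : I), mulT2 k A (D a (e s * μ * e s)) = 0) ∧
    (∀ a : A, mulT2 k A (D a μ) = 0) ∧
    ∀ (lam : I → k) (a x : A),
      x ∈ twoSidedSpan k (μ - ∑ s, lam s • e s) →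
      mulT2 k A (D a x) ∈ twoSidedSpan k (μ - ∑ s, lam s • e s) := by
  refine ⟨hμ.mulT2_apply_corner hD, hμ.mulT2_apply_self hD he_sum, fun lam a x hx => ?_⟩
  have hB : mulT2 k A (D a (∑ s, lam s • e s)) = 0 := by
    simp [(hDB _ a).2]
  refine hD.mulT2_apply_mem_twoSidedSpan ?_ hx
  rw [map_sub, map_sub, hμ.mulT2_apply_self hD he_sum, hB, sub_zero]

/-- For a B-linear double bracket with moment map μ and
{a,b} := m(⟪a,b⟫): {a, μ_s} = 0 for all s, hence {a, μ} = 0; and for any λ ∈ B the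
bracket preserves the two-sided ideal (μ − λ), so the induced bracket on H₀(A) descends
to A/(μ−λ). -/
theorem momentMap_bracket_descends
    {k : Type*} [Field k] [CharZero k]
    {A : Type*} [Ring A] [Algebra k A]
    {I : Type*} [Fintype I]
    (e : I → A)
    (he_idem : ∀ s, e s * e s = e s)
    (he_orth : ∀ s t, s ≠ t → e s * e t = 0)
    (he_sum : ∑ s, e s = 1)
    (he_ne : ∀ s, e s ≠ 0)
    (D : A →ₗ[k] A →ₗ[k] A ⊗[k] A)
    (hD : IsDoubleBracket D)
    (hDB : ∀ (s : I) (a : A), D (e s) a = 0 ∧ D a (e s) = 0)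
    (μ : A) (hμ : IsMomentMap e D μ) :
    (∀ (a : A) (s : I), mulT2 k A (D a (e s * μ * e s)) = 0) ∧
    (∀ a : A, mulT2 k A (D a μ) = 0) ∧
    ∀ (lam : I → k) (a x : A),
      x ∈ twoSidedSpan k (μ - ∑ s, lam s • e s) →
      mulT2 k A (D a x) ∈ twoSidedSpan k (μ - ∑ s, lam s • e s) :=
  momentMap_bracket_descends_general e he_sum D hD hDB μ hμ
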